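/- arXiv:1702.03194 — 3 statements merged into one kernel-verified Lean document; each statement's English description precedes it below -/
import Mathlib

section
/- Let r = [r_0, ..., r_m] and c = [c_0, ..., c_n] be strictly increasing sequences of natural numbers, and let {r̂, ĉ} be an ordered sub-pair for {r, c} of length p+1. Then the (p+1)×(p+1) matrix T_{r̂,ĉ} with (i,j) entry C(ĉ_j, r̂_i) is invertible. -/
/-!
Every minor of the Pascal matrix with increasing row indices `s` and column indices `t` is
nonnegative, and positive when `s ≤ t` entrywise; both facts are proved together by induction on
the size of the minor and on `s 0`.
If `s 0 > 0`, the identity `(s + 1) C(t + 1, s + 1) = (t + 1) C(t, s)` rescales rows and columns by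
positive factors and lowers every index by one (unless `t 0 = 0`, when the first column vanishes).
If `s 0 = 0`, subtracting from each column the previous one turns the first row into a unit
vector, and by the hockey-stick identity the remaining minor has entries
`∑_{t_j ≤ u < t_{j+1}} C(u, s_{i+1} - 1)`. Multilinearity expands it into a sum of smaller minors
whose columns `u` interlace with `t`, hence are increasing; the term `u_j = t_{j+1} - 1` is
positive when `s ≤ t`.
-/

/-- The submatrix of the Pascal upper-triangular matrix with rows
`r 0, …, r m` and columns `c 0, …, c n`: its `(i,j)` entry is the binomial
coefficient `C(c j, r i)` (which is `0` when `r i > c j`). -/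
def pascalSub (r c : ℕ → ℕ) (m n : ℕ) : Matrix (Fin (m + 1)) (Fin (n + 1)) ℚ :=
  Matrix.of fun i j => ((c (j : ℕ)).choose (r (i : ℕ)) : ℚ)

/-- `{r ∘ α, c ∘ β}` (restricted to indices `0, …, p`) is an ordered sub-pair of
length `p + 1` for the pair of finite sequences `[r 0, …, r m]`, `[c 0, …, c n]`:
`α` and `β` are strictly increasing selections of indices (so `r ∘ α` is a
subsequence of `[r 0, …, r m]` and `c ∘ β` is a subsequence of `[c 0, …, c n]`)
and `r (α i) ≤ c (β i)` for all `i = 0, …, p`. -/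
def OrderedSubPair (r c : ℕ → ℕ) (m n p : ℕ) (α β : ℕ → ℕ) : Prop :=
  StrictMonoOn α (Set.Iic p) ∧ StrictMonoOn β (Set.Iic p) ∧
    α p ≤ m ∧ β p ≤ n ∧ ∀ i ≤ p, r (α i) ≤ c (β i)

open Finset Matrix

/-- The paper's `T`; its submatrix `T_{r,c}` is `(pascalMatrix R).submatrix r c`. -/
def pascalMatrix (R : Type*) [NatCast R] : Matrix ℕ ℕ R :=
  of fun i j => (j.choose i : R)

theorem Nat.sum_Ico_choose_eq_sub {R : Type*} [AddCommGroupWithOne R] {a b : ℕ} (k : ℕ)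
    (hab : a ≤ b) :
    ∑ u ∈ Ico a b, (u.choose k : R) = b.choose (k + 1) - a.choose (k + 1) := by
  rw [← sum_Ico_sub (fun u => (u.choose (k + 1) : R)) hab]
  refine sum_congr rfl fun u _ => ?_
  rw [Nat.choose_succ_succ', Nat.cast_add, add_sub_cancel_right]

variable {R : Type*} [CommRing R]

theorem Matrix.det_of_sum_col {n ι : Type*} [Fintype n] [DecidableEq n] [DecidableEq ι]
    (A : Matrix n ι R) (S : n → Finset ι) :
    det (of fun i j => ∑ u ∈ S j, A i u) = ∑ u ∈ Fintype.piFinset S, det (A.submatrix id u) := by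
  rw [← det_transpose]
  convert (detRowAlternating : (n → R) [⋀^n]→ₗ[R] R).toMultilinearMap.map_sum_finset
    (fun j u i => A i u) S using 1
  · congr 1
    ext j i
    simp
  · refine sum_congr rfl fun u _ => ?_
    rw [← det_transpose]
    rfl

theorem det_pascalMatrix_submatrix_add_one {k : ℕ} (s t : Fin k → ℕ) :
    (∏ i, (s i + 1 : R)) * det ((pascalMatrix R).submatrix (fun i => s i + 1) fun j => t j + 1) =
      (∏ j, (t j + 1 : R)) * det ((pascalMatrix R).submatrix s t) := by
  rw [← det_mul_column, ← det_mul_row]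
  congr 1
  ext i j
  simp only [of_apply, submatrix_apply, pascalMatrix]
  rw [mul_comm]
  exact_mod_cast congrArg Nat.cast (Nat.add_one_mul_choose_eq (t j) (s i)).symm

theorem det_pascalMatrix_submatrix_cons_zero {q : ℕ} (s : Fin q → ℕ) {t : Fin (q + 1) → ℕ}
    (ht : Monotone t) :
    det ((pascalMatrix R).submatrix (Fin.cons 0 fun i => s i + 1) t) =
      ∑ u ∈ Fintype.piFinset fun j : Fin q => Ico (t j.castSucc) (t j.succ),
        det ((pascalMatrix R).submatrix s u) := by
  set A := (pascalMatrix R).submatrix (Fin.cons 0 fun i => s i + 1) t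
  let B : Matrix (Fin (q + 1)) (Fin (q + 1)) R :=
    of fun i => Fin.cases (A i 0) fun j => A i j.succ - A i j.castSucc
  have hAB : det A = det B :=
    det_eq_of_forall_col_eq_smul_add_pred (fun _ => 1) (fun _ => rfl) fun i j => by simp [B]
  have hB₀₀ : B 0 0 = 1 := by simp [B, A, pascalMatrix]
  have hB₀ : ∀ j ≠ 0, B 0 j = 0 := by
    intro j hj
    obtain ⟨j, rfl⟩ := Fin.exists_succ_eq.2 hj
    simp [B, A, pascalMatrix]
  have hminor : B.submatrix Fin.succ Fin.succ =
      of fun i j => ∑ u ∈ Ico (t j.castSucc) (t j.succ), (pascalMatrix R).submatrix s id i u := by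
    ext i j
    simp [B, A, pascalMatrix, Nat.sum_Ico_choose_eq_sub _ (ht j.castSucc_le_succ)]
  rw [hAB, det_succ_row_zero, sum_eq_single_of_mem 0 (mem_univ _) fun j _ hj => by simp [hB₀ j hj],
    Fin.succAbove_zero, hminor, det_of_sum_col, hB₀₀]
  simp

theorem det_pascalMatrix_submatrix_eq_zero_of_lt {k : ℕ} {s t : Fin k → ℕ} (j : Fin k)
    (h : ∀ i, t j < s i) : det ((pascalMatrix R).submatrix s t) = 0 :=
  det_eq_zero_of_column_eq_zero j fun i => by
    simp [pascalMatrix, Nat.choose_eq_zero_of_lt (h i)]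

theorem StrictMono.exists_eq_add_one {k : ℕ} {s : Fin k → ℕ} (hs : StrictMono s)
    (hpos : ∀ i, 0 < s i) : ∃ s' : Fin k → ℕ, StrictMono s' ∧ s = fun i => s' i + 1 :=
  ⟨fun i => s i - 1, fun i j hij => by have := hs hij; have := hpos i; dsimp only; omega,
    funext fun i => (Nat.sub_add_cancel (hpos i)).symm⟩

theorem strictMono_of_mem_piFinset_Ico {q : ℕ} {t : Fin (q + 1) → ℕ} (ht : Monotone t)
    {u : Fin q → ℕ} (hu : u ∈ Fintype.piFinset fun j : Fin q => Ico (t j.castSucc) (t j.succ)) :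
    StrictMono u := by
  intro i j hij
  simp only [Fintype.mem_piFinset, mem_Ico] at hu
  calc u i < t i.succ := (hu i).2
    _ ≤ t j.castSucc := ht (Fin.succ_le_castSucc_iff.2 hij)
    _ ≤ u j := (hu j).1

section Ordered

variable [LinearOrder R] [IsStrictOrderedRing R]

theorem det_pascalMatrix_submatrix_cons_zero_nonneg {q : ℕ} {s : Fin q → ℕ}
    {t : Fin (q + 1) → ℕ} (ht : Monotone t)
    (ih : ∀ u : Fin q → ℕ, StrictMono u → 0 ≤ det ((pascalMatrix R).submatrix s u)) :
    0 ≤ det ((pascalMatrix R).submatrix (Fin.cons 0 fun i => s i + 1) t) := by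
  rw [det_pascalMatrix_submatrix_cons_zero s ht]
  exact sum_nonneg fun u hu => ih u (strictMono_of_mem_piFinset_Ico ht hu)

theorem det_pascalMatrix_submatrix_cons_zero_pos {q : ℕ} {s : Fin q → ℕ}
    {t : Fin (q + 1) → ℕ} (ht : StrictMono t) (hst : ∀ i, s i < t i.succ)
    (ih_nonneg : ∀ u : Fin q → ℕ, StrictMono u → 0 ≤ det ((pascalMatrix R).submatrix s u))
    (ih_pos : ∀ u : Fin q → ℕ, StrictMono u → (∀ i, s i ≤ u i) →
      0 < det ((pascalMatrix R).submatrix s u)) :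
    0 < det ((pascalMatrix R).submatrix (Fin.cons 0 fun i => s i + 1) t) := by
  rw [det_pascalMatrix_submatrix_cons_zero s ht.monotone]
  refine sum_pos' (fun u hu => ih_nonneg u (strictMono_of_mem_piFinset_Ico ht.monotone hu))
    ⟨fun j => t j.succ - 1, ?_, ih_pos _ (fun i j hij => ?_) fun i => ?_⟩
  · simp only [Fintype.mem_piFinset, mem_Ico]
    intro j
    have := ht j.castSucc_lt_succ
    omega
  · have := ht (Fin.succ_pos i)
    have := ht (Fin.succ_lt_succ_iff.2 hij)
    omega
  · have := hst i
    omega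

theorem det_pascalMatrix_submatrix_add_one_nonneg_and_pos {k : ℕ} {s t : Fin k → ℕ}
    (h : 0 ≤ det ((pascalMatrix R).submatrix s t) ∧
      ((∀ i, s i ≤ t i) → 0 < det ((pascalMatrix R).submatrix s t))) :
    0 ≤ det ((pascalMatrix R).submatrix (fun i => s i + 1) fun j => t j + 1) ∧
      ((∀ i, s i + 1 ≤ t i + 1) →
        0 < det ((pascalMatrix R).submatrix (fun i => s i + 1) fun j => t j + 1)) := by
  have hs_prod : 0 < ∏ i, (s i + 1 : R) := prod_pos fun i _ => by positivity
  have ht_prod : 0 < ∏ j, (t j + 1 : R) := prod_pos fun j _ => by positivity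
  have hscale := det_pascalMatrix_submatrix_add_one (R := R) s t
  refine ⟨nonneg_of_mul_nonneg_right ?_ hs_prod, fun hst => pos_of_mul_pos_right ?_ hs_prod.le⟩
  · rw [hscale]
    exact mul_nonneg ht_prod.le h.1
  · rw [hscale]
    exact mul_pos ht_prod (h.2 fun i => Nat.add_one_le_add_one_iff.1 (hst i))

theorem det_pascalMatrix_submatrix_nonneg_and_pos {k : ℕ} {s t : Fin k → ℕ}
    (hs : StrictMono s) (ht : StrictMono t) :
    0 ≤ det ((pascalMatrix R).submatrix s t) ∧
      ((∀ i, s i ≤ t i) → 0 < det ((pascalMatrix R).submatrix s t)) := by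
  induction k with
  | zero => simp
  | succ q ih =>
    induction h₀ : s 0 generalizing s t with
    | zero =>
      obtain ⟨s', hs', hs'_eq⟩ := (hs.comp Fin.strictMono_succ).exists_eq_add_one
        fun i => h₀ ▸ hs (Fin.succ_pos i)
      obtain rfl : s = Fin.cons 0 fun i => s' i + 1 := by
        rw [← hs'_eq, ← h₀]
        exact (Fin.cons_self_tail s).symm
      exact ⟨det_pascalMatrix_submatrix_cons_zero_nonneg ht.monotone fun u hu => (ih hs' hu).1,
        fun hst => det_pascalMatrix_submatrix_cons_zero_pos ht (fun i => hst i.succ)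
          (fun u hu => (ih hs' hu).1) fun u hu => (ih hs' hu).2⟩
    | succ n ihn =>
      have hs_pos : ∀ i, 0 < s i := fun i => by
        have := hs.monotone i.zero_le
        omega
      by_cases ht₀ : t 0 = 0
      · have hzero := det_pascalMatrix_submatrix_eq_zero_of_lt (R := R) (t := t) 0 fun i => by
          simpa [ht₀] using hs_pos i
        refine ⟨hzero.ge, fun hst => ?_⟩
        have := hst 0
        omega
      obtain ⟨s', hs', rfl⟩ := hs.exists_eq_add_one hs_pos
      obtain ⟨t', ht', rfl⟩ := ht.exists_eq_add_one fun j =>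
        Nat.pos_of_ne_zero ht₀ |>.trans_le (ht.monotone j.zero_le)
      exact det_pascalMatrix_submatrix_add_one_nonneg_and_pos (ihn hs' ht' (by simpa using h₀))

end Ordered

/-- If `{r ∘ α, c ∘ β}` is an ordered sub-pair of length `p + 1` for
`{[r 0, …, r m], [c 0, …, c n]}`, then the `(p+1) × (p+1)` Pascal submatrix
`T_{r̂,ĉ}`, with `(i,j)` entry `C(c (β j), r (α i))`, is invertible. -/
theorem pascal_orderedSubPair_submatrix_invertible
    (m n p : ℕ) (r c α β : ℕ → ℕ) (hr : StrictMono r) (hc : StrictMono c)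
    (hsub : OrderedSubPair r c m n p α β) :
    IsUnit (Matrix.of fun i j : Fin (p + 1) =>
        ((c (β (j : ℕ))).choose (r (α (i : ℕ))) : ℚ)) := by
  obtain ⟨hα, hβ, -, -, hle⟩ := hsub
  have hs : StrictMono fun i : Fin (p + 1) => r (α i) :=
    hr.comp fun i j hij => hα (Set.mem_Iic.2 i.is_le) (Set.mem_Iic.2 j.is_le) hij
  have ht : StrictMono fun j : Fin (p + 1) => c (β j) :=
    hc.comp fun i j hij => hβ (Set.mem_Iic.2 i.is_le) (Set.mem_Iic.2 j.is_le) hij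
  rw [isUnit_iff_isUnit_det, isUnit_iff_ne_zero]
  exact ((det_pascalMatrix_submatrix_nonneg_and_pos hs ht).2 fun i => hle i i.is_le).ne'
end

section
/- Let r = [r_0, ..., r_m] and c = [c_0, ..., c_n] be strictly increasing sequences of natural numbers, and let {r̂, ĉ} be an ordered sub-pair for {r, c} of length p+1. Then the (p+1)×(n+1) matrix T_{r̂,c} with (i,j) entry C(c_j, r̂_i) has full row rank, i.e., its rank equals p+1. -/
/-! Write `T_{a,b}` for the square Pascal minor with entries `C(b j, a i)`. For strictly
increasing `a` and `b`, `det T_{a,b} ≥ 0`, with strict inequality when `a ≤ b`; this is proved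
by induction on the size and on `a 0`. If `a 0 > 0`, the identity
`a C(b, a) = b C(b - 1, a - 1)` relates `det T_{a,b}` to `det T_{a-1,b-1}` by positive factors.
If `a 0 = 0`, the first row consists of ones; subtracting consecutive columns and using the
hockey-stick identity, the remaining minor has columns `∑_{x ∈ [b_{j-1}, b_j)} C(x, a_i - 1)`, so
multilinearity writes `det T_{a,b}` as a sum of minors `det T_{a'-1,x}`, `a'` the tail of `a`,
over the sequences `x` interlacing `b`; all of them are nonnegative and the one for `x_j = b_j - 1` is
positive. In the theorem, the columns `β` select such a positive square minor of `T_{r̂,c}`. -/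

open Finset Matrix

theorem Nat.sum_range_choose_eq_choose_succ (d k : ℕ) :
    ∑ x ∈ range d, x.choose k = d.choose (k + 1) :=
  sum_range_induction _ (·.choose (k + 1)) (by simp) d fun x _ => by
    rw [Nat.choose_succ_succ', add_comm]

theorem Nat.cast_choose_sub_cast_choose_eq_sum_Ico (R : Type*) [CommRing R] {c d : ℕ}
    (h : c ≤ d) (k : ℕ) :
    (d.choose (k + 1) : R) - c.choose (k + 1) = ∑ x ∈ Ico c d, (x.choose k : R) := by
  rw [sum_Ico_eq_sub _ h]
  simp only [← Nat.cast_sum, Nat.sum_range_choose_eq_choose_succ]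

theorem Nat.mul_choose_eq_mul_choose_sub_one {a : ℕ} (ha : a ≠ 0) (b : ℕ) :
    a * b.choose a = b * (b - 1).choose (a - 1) := by
  obtain ⟨a, rfl⟩ := Nat.exists_eq_succ_of_ne_zero ha
  rcases b with _ | b
  · simp
  · simpa [mul_comm] using (Nat.add_one_mul_choose_eq b a).symm

theorem StrictMono.sub_one {ι : Type*} [Preorder ι] {f : ι → ℕ} (hf : StrictMono f)
    (h : ∀ i, 0 < f i) : StrictMono fun i => f i - 1 := fun i j hij => by
  have := hf hij
  have := h i
  show f i - 1 < f j - 1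
  omega

theorem StrictMono.succ_sub_one {k : ℕ} {f : Fin (k + 1) → ℕ} (hf : StrictMono f) :
    StrictMono fun i : Fin k => f i.succ - 1 :=
  (hf.comp Fin.strictMono_succ).sub_one fun i => (Nat.zero_le _).trans_lt (hf (Fin.succ_pos i))

theorem StrictMonoOn.strictMono_fin {γ : Type*} [Preorder γ] {f : ℕ → γ} {p : ℕ}
    (hf : StrictMonoOn f (Set.Iic p)) : StrictMono fun i : Fin (p + 1) => f i :=
  fun i j hij => hf (Nat.lt_succ_iff.mp i.isLt) (Nat.lt_succ_iff.mp j.isLt) hij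

def pascalMinor (R : Type*) [NatCast R] {m n : Type*} (a : m → ℕ) (b : n → ℕ) :
    Matrix m n R :=
  of fun i j => ((b j).choose (a i) : R)

@[simp]
theorem pascalMinor_apply (R : Type*) [NatCast R] {m n : Type*} (a : m → ℕ) (b : n → ℕ)
    (i : m) (j : n) : pascalMinor R a b i j = (b j).choose (a i) := rfl

def interlacing {k : ℕ} (b : Fin (k + 1) → ℕ) : Finset (Fin k → ℕ) :=
  Fintype.piFinset fun j => Ico (b j.castSucc) (b j.succ)

theorem mem_interlacing {k : ℕ} {b : Fin (k + 1) → ℕ} {x : Fin k → ℕ} :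
    x ∈ interlacing b ↔ ∀ j, b j.castSucc ≤ x j ∧ x j < b j.succ := by
  simp only [interlacing, Fintype.mem_piFinset, mem_Ico]

theorem StrictMono.mem_interlacing_succ_sub_one {k : ℕ} {b : Fin (k + 1) → ℕ}
    (hb : StrictMono b) : (fun j : Fin k => b j.succ - 1) ∈ interlacing b :=
  mem_interlacing.mpr fun j => by
    have := hb (Fin.castSucc_lt_succ (i := j))
    omega

theorem strictMono_of_mem_interlacing {k : ℕ} {b : Fin (k + 1) → ℕ} (hb : Monotone b)
    {x : Fin k → ℕ} (hx : x ∈ interlacing b) : StrictMono x := fun i j hij => by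
  have hi := mem_interlacing.mp hx i
  have hj := mem_interlacing.mp hx j
  have := hb (Fin.succ_le_castSucc_iff.mpr hij)
  omega

section Determinant

variable {R : Type*} [CommRing R] {k : ℕ}

theorem prod_mul_det_pascalMinor (a b : Fin k → ℕ) (ha : ∀ i, 0 < a i) :
    (∏ i, (a i : R)) * (pascalMinor R a b).det =
      (∏ j, (b j : R)) * (pascalMinor R (fun i => a i - 1) fun j => b j - 1).det := by
  rw [← det_mul_column, ← det_mul_row]
  congr 1
  ext i j
  simp only [of_apply, pascalMinor_apply]
  rw [← Nat.cast_mul, ← Nat.cast_mul, Nat.mul_choose_eq_mul_choose_sub_one (ha i).ne']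

theorem det_pascalMinor_eq_sum_interlacing (a b : Fin (k + 1) → ℕ) (ha : StrictMono a)
    (ha0 : a 0 = 0) (hb : Monotone b) :
    (pascalMinor R a b).det =
      ∑ x ∈ interlacing b, (pascalMinor R (fun i : Fin k => a i.succ - 1) x).det := by
  set M := pascalMinor R a b
  let B : Matrix (Fin (k + 1)) (Fin (k + 1)) R :=
    of fun i => Fin.cases (M i 0) fun j => M i j.succ - M i j.castSucc
  have hMB : M.det = B.det :=
    det_eq_of_forall_col_eq_smul_add_pred (fun _ => 1) (fun _ => rfl) fun i j => by simp [B]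
  have hB00 : B 0 0 = 1 := by simp [B, M, ha0]
  have hB0 : ∀ j : Fin k, B 0 j.succ = 0 := fun j => by simp [B, M, ha0]
  have hcols : (B.submatrix Fin.succ Fin.succ)ᵀ = of fun j =>
      ∑ x ∈ Ico (b j.castSucc) (b j.succ), fun i => (x.choose (a i.succ - 1) : R) := by
    ext j i
    have : a i.succ - 1 + 1 = a i.succ := by have := ha (Fin.succ_pos i); omega
    simp only [B, M, transpose_apply, submatrix_apply, of_apply, Fin.cases_succ,
      pascalMinor_apply, Finset.sum_apply]
    rw [← Nat.cast_choose_sub_cast_choose_eq_sum_Ico R (hb (Fin.castSucc_le_succ j)), this]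
  rw [hMB, det_succ_row_zero, Fin.sum_univ_succ, Finset.sum_eq_zero fun j _ => by simp [hB0],
    add_zero, Fin.succAbove_zero, hB00, Fin.val_zero, pow_zero, one_mul, one_mul,
    ← det_transpose, hcols]
  exact (detRowAlternating.toMultilinearMap.map_sum_finset
    (fun (_ : Fin k) (x : ℕ) (i : Fin k) => (x.choose (a i.succ - 1) : R))
    fun j => Ico (b j.castSucc) (b j.succ)).trans
      (sum_congr rfl fun x _ => det_transpose (pascalMinor R (fun i : Fin k => a i.succ - 1) x))

variable [LinearOrder R] [IsStrictOrderedRing R]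

theorem det_pascalMinor_nonneg {a b : Fin k → ℕ} (ha : StrictMono a) (hb : StrictMono b) :
    0 ≤ (pascalMinor R a b).det := by
  induction k with
  | zero => simp
  | succ k ihk =>
    obtain ⟨d, hd⟩ : ∃ d, a 0 = d := ⟨_, rfl⟩
    induction d generalizing a b with
    | zero =>
      rw [det_pascalMinor_eq_sum_interlacing a b ha hd hb.monotone]
      exact sum_nonneg fun x hx =>
        ihk ha.succ_sub_one (strictMono_of_mem_interlacing hb.monotone hx)
    | succ d ih =>
      have ha0 : ∀ i, 0 < a i := fun i => by have := ha.monotone (Fin.zero_le i); omega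
      have hapos : 0 < ∏ i, (a i : R) := prod_pos fun i _ => Nat.cast_pos.mpr (ha0 i)
      have hprod := prod_mul_det_pascalMinor (R := R) a b ha0
      by_cases hb0 : b 0 = 0
      · rw [prod_eq_zero (f := fun j => (b j : R)) (mem_univ 0) (by simp [hb0]), zero_mul]
          at hprod
        exact ((mul_eq_zero.mp hprod).resolve_left hapos.ne').ge
      · have hb0 : ∀ j, 0 < b j := fun j => by have := hb.monotone (Fin.zero_le j); omega
        refine nonneg_of_mul_nonneg_right ?_ hapos
        rw [hprod]
        exact mul_nonneg (prod_nonneg fun j _ => Nat.cast_nonneg _)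
          (ih (ha.sub_one ha0) (hb.sub_one hb0) (by simp [hd]))

theorem det_pascalMinor_pos {a b : Fin k → ℕ} (ha : StrictMono a) (hb : StrictMono b)
    (hab : a ≤ b) : 0 < (pascalMinor R a b).det := by
  induction k with
  | zero => simp
  | succ k ihk =>
    obtain ⟨d, hd⟩ : ∃ d, a 0 = d := ⟨_, rfl⟩
    induction d generalizing a b with
    | zero =>
      rw [det_pascalMinor_eq_sum_interlacing a b ha hd hb.monotone]
      refine sum_pos' (fun x hx => det_pascalMinor_nonneg ha.succ_sub_one
        (strictMono_of_mem_interlacing hb.monotone hx))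
        ⟨_, hb.mem_interlacing_succ_sub_one, ihk ha.succ_sub_one hb.succ_sub_one
          fun j => Nat.sub_le_sub_right (hab j.succ) 1⟩
    | succ d ih =>
      have ha0 : ∀ i, 0 < a i := fun i => by have := ha.monotone (Fin.zero_le i); omega
      have hb0 : ∀ j, 0 < b j := fun j => (ha0 j).trans_le (hab j)
      have hprod := prod_mul_det_pascalMinor (R := R) a b ha0
      refine pos_of_mul_pos_right (hprod ▸ mul_pos (prod_pos fun j _ => Nat.cast_pos.mpr (hb0 j))
        (ih (ha.sub_one ha0) (hb.sub_one hb0) (fun i => Nat.sub_le_sub_right (hab i) 1)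
          (by simp [hd]))) (prod_nonneg fun i _ => Nat.cast_nonneg _)

end Determinant

/-- If `{r ∘ α, c ∘ β}` is an ordered sub-pair of length `p + 1` for
`{[r 0, …, r m], [c 0, …, c n]}`, then the `(p+1) × (n+1)` Pascal submatrix
`T_{r̂,c}`, with `(i,j)` entry `C(c j, r (α i))`, has full row rank `p + 1`. -/
theorem pascal_orderedSubPair_full_row_rank
    (m n p : ℕ) (r c α β : ℕ → ℕ) (hr : StrictMono r) (hc : StrictMono c)
    (hsub : OrderedSubPair r c m n p α β) :
    (Matrix.of fun (i : Fin (p + 1)) (j : Fin (n + 1)) =>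
        ((c (j : ℕ)).choose (r (α (i : ℕ))) : ℚ)).rank = p + 1 := by
  obtain ⟨hα, hβ, -, hβn, hrc⟩ := hsub
  let a : Fin (p + 1) → ℕ := fun i => r (α i)
  let g : Fin (p + 1) → Fin (n + 1) := fun i =>
    ⟨β i, Nat.lt_succ_of_le <| (hβ.monotoneOn (Nat.lt_succ_iff.mp i.isLt)
      (Set.mem_Iic.mpr le_rfl) (Nat.lt_succ_iff.mp i.isLt)).trans hβn⟩
  have hdet : (pascalMinor ℚ a fun i : Fin (p + 1) => c (β i)).det ≠ 0 :=
    (det_pascalMinor_pos (hr.comp hα.strictMono_fin) (hc.comp hβ.strictMono_fin)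
      fun i => hrc i (Nat.lt_succ_iff.mp i.isLt)).ne'
  refine le_antisymm ((rank_le_card_height _).trans_eq (Fintype.card_fin _)) ?_
  calc p + 1 = (pascalMinor ℚ a fun i : Fin (p + 1) => c (β i)).rank := by
        rw [rank_of_isUnit _ ((isUnit_iff_isUnit_det _).mpr hdet.isUnit), Fintype.card_fin]
    _ ≤ _ := rank_submatrix_le (pascalMinor ℚ a fun j : Fin (n + 1) => c j) id g
end

section
/- Let r = [r_0, ..., r_m] and c = [c_0, ..., c_n] be strictly increasing sequences of natural numbers. If {r, c} admits an ordered sub-pair of length p+1, then the rank of the matrix T_{r,c} with (i,j) entry C(c_j, r_i) is at least p+1. -/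
/-!
The ordered sub-pair selects a square submatrix `[C(c j, r i)]` with `r`, `c` strictly increasing
and `r i ≤ c i`; its determinant is positive, so the rank is at least its size.

Positivity goes by induction on the size and on `r 0`. If `r 0 = 0` the first row is all ones;
subtracting from each column its left neighbour and using the hockey-stick identity turns every
other column into a sum of binomial columns, so by multilinearity the determinant is a sum of
smaller determinants of the same kind. These are all nonnegative (one vanishes as soon as some
`r i > c i`, having a too large zero block) and the one built from the least admissible entries is
positive. If `r 0 > 0`, the identity `r C(c, r) = c C(c - 1, r - 1)` lowers all indices by one.
-/

open Matrix Finset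

theorem Nat.sum_Ico_choose_add (k : ℕ) {a b : ℕ} (hab : a ≤ b) :
    ∑ d ∈ Ico a b, d.choose k + a.choose (k + 1) = b.choose (k + 1) := by
  induction b, hab using Nat.le_induction with
  | base => simp
  | succ b hab ih => rw [sum_Ico_succ_top hab, add_right_comm, ih, Nat.choose_succ_succ', add_comm]

namespace Matrix

variable {R : Type*} [CommRing R]

theorem det_eq_zero_of_zero_lower_left_block {N : ℕ} (A : Matrix (Fin N) (Fin N) R)
    (i : Fin N) (h : ∀ k j, i ≤ k → j ≤ i → A k j = 0) : A.det = 0 := by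
  rw [det_apply]
  refine Finset.sum_eq_zero fun σ _ => ?_
  -- `σ` cannot map all of `Iic i` into the smaller set `Iio i`
  obtain ⟨j, hji, hiσ⟩ : ∃ j ≤ i, i ≤ σ j := by
    by_contra! hσ
    obtain ⟨x, -, y, -, hxy, hσxy⟩ := exists_ne_map_eq_of_card_lt_of_maps_to
      (by simp : #(Iio i) < #(Iic i)) fun j hj => mem_Iio.2 (hσ j (mem_Iic.1 hj))
    exact hxy (σ.injective hσxy)
  rw [Finset.prod_eq_zero (f := fun j => A (σ j) j) (mem_univ j) (h _ _ hiσ hji), smul_zero]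

theorem det_of_sum_col_s5 {n α : Type*} [DecidableEq n] [Fintype n] (S : n → Finset α)
    (f : α → n → R) :
    det (of fun i j => ∑ d ∈ S j, f d i) =
      ∑ D ∈ Fintype.piFinset S, det (of fun i j => f (D j) i) := by
  rw [← det_transpose]
  convert (detRowAlternating (n := n) (R := R)).toMultilinearMap.map_sum_finset
    (fun j d => f d) S using 1
  · congr 1
    ext j i
    simp [Finset.sum_apply]
  · refine Finset.sum_congr rfl fun D _ => ?_
    rw [← det_transpose]
    rfl

theorem le_rank_of_det_submatrix_ne_zero {K m n ι : Type*} [Field K] [Fintype n] [Fintype ι]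
    [DecidableEq ι] (A : Matrix m n K) (f : ι → m) (g : ι → n)
    (h : (A.submatrix f g).det ≠ 0) :
    Fintype.card ι ≤ A.rank := by
  rw [← rank_of_isUnit _ ((isUnit_iff_isUnit_det _).2 h.isUnit)]
  exact rank_submatrix_le A f g

end Matrix

def binomialMatrix (R : Type*) [NatCast R] {m n : Type*} (r : m → ℕ) (c : n → ℕ) :
    Matrix m n R :=
  of fun i j => ((c j).choose (r i) : R)

section binomialMatrix

variable {R : Type*} [CommRing R]

theorem det_binomialMatrix_eq_zero {N : ℕ} {r c : Fin N → ℕ} (hr : Monotone r)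
    (hc : Monotone c) {i : Fin N} (hi : c i < r i) : (binomialMatrix R r c).det = 0 :=
  det_eq_zero_of_zero_lower_left_block _ i fun _ _ hk hj => by
    simp [binomialMatrix, Nat.choose_eq_zero_of_lt ((hc hj).trans_lt (hi.trans_le (hr hk)))]

theorem prod_mul_det_binomialMatrix_succ {n : Type*} [DecidableEq n] [Fintype n] (r c : n → ℕ) :
    (∏ i, ((r i + 1 : ℕ) : R)) * (binomialMatrix R (fun i => r i + 1) fun j => c j + 1).det =
      (∏ j, ((c j + 1 : ℕ) : R)) * (binomialMatrix R r c).det := by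
  rw [← det_mul_column, ← det_mul_row]
  congr 1
  ext i j
  simp only [binomialMatrix, of_apply]
  norm_cast
  rw [mul_comm, Nat.add_one_mul_choose_eq]

theorem det_binomialMatrix_cons_zero {M : ℕ} (r : Fin M → ℕ) (c : Fin (M + 1) → ℕ)
    (hc : Monotone c) :
    (binomialMatrix R (Fin.cons 0 fun i => r i + 1) c).det =
      ∑ D ∈ Fintype.piFinset fun j : Fin M => Ico (c j.castSucc) (c j.succ),
        (binomialMatrix R r D).det := by
  set A := binomialMatrix R (Fin.cons 0 fun i => r i + 1) c
  set B : Matrix (Fin (M + 1)) (Fin (M + 1)) R :=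
    of fun i => Fin.cons (A i 0) fun j => A i j.succ - A i j.castSucc
  have hAB : A.det = B.det :=
    det_eq_of_forall_col_eq_smul_add_pred (fun _ => 1) (fun _ => rfl) fun _ _ => by simp [B]
  have hB : B.det = (B.submatrix Fin.succ Fin.succ).det := by
    rw [det_succ_row_zero, Fin.sum_univ_succ]
    simp [B, A, binomialMatrix]
  have hBsucc : B.submatrix Fin.succ Fin.succ =
      of fun i j => ∑ d ∈ Ico (c j.castSucc) (c j.succ), ((d.choose (r i) : ℕ) : R) := by
    ext i j
    simp only [B, A, binomialMatrix, submatrix_apply, of_apply, Fin.cons_succ]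
    rw [sub_eq_iff_eq_add, ← Nat.sum_Ico_choose_add (r i) (hc (Fin.castSucc_le_succ j))]
    push_cast
    rfl
  rw [hAB, hB, hBsucc, det_of_sum_col_s5]
  rfl

end binomialMatrix

theorem strictMono_of_mem_piFinset_Ico_s5 {M : ℕ} {c : Fin (M + 1) → ℕ} (hc : Monotone c)
    {D : Fin M → ℕ} (hD : D ∈ Fintype.piFinset fun j => Ico (c j.castSucc) (c j.succ)) :
    StrictMono D := by
  intro i j hij
  have hi := mem_Ico.1 (Fintype.mem_piFinset.1 hD i)
  have hj := mem_Ico.1 (Fintype.mem_piFinset.1 hD j)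
  exact hi.2.trans_le ((hc (Fin.succ_le_castSucc_iff.2 hij)).trans hj.1)

section positivity

variable {R : Type*} [CommRing R] [LinearOrder R] [IsStrictOrderedRing R]

theorem det_binomialMatrix_pos_of_head_eq_zero {M : ℕ}
    (hpos : ∀ {r c : Fin M → ℕ}, StrictMono r → StrictMono c → (∀ i, r i ≤ c i) →
      0 < (binomialMatrix R r c).det)
    {r c : Fin (M + 1) → ℕ} (hr : StrictMono r) (hc : StrictMono c) (hrc : ∀ i, r i ≤ c i)
    (h0 : r 0 = 0) : 0 < (binomialMatrix R r c).det := by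
  have hr1 (i : Fin M) : 0 < r i.succ := by simpa [h0] using hr (Fin.succ_pos i)
  set r' : Fin M → ℕ := fun i => r i.succ - 1
  have hr' : StrictMono r' := fun i j hij => by
    have := hr (Fin.succ_lt_succ_iff.2 hij)
    have := hr1 i
    simp only [r']
    omega
  have hr_eq : r = Fin.cons 0 fun i => r' i + 1 := by
    ext i
    cases i using Fin.cases with
    | zero => exact h0
    | succ i => simp [r', Nat.sub_add_cancel (hr1 i)]
  have hnonneg {D : Fin M → ℕ} (hD : StrictMono D) : 0 ≤ (binomialMatrix R r' D).det := by
    by_cases hle : ∀ i, r' i ≤ D i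
    · exact (hpos hr' hD hle).le
    · obtain ⟨i, hi⟩ := not_forall.1 hle
      exact (det_binomialMatrix_eq_zero hr'.monotone hD.monotone (not_le.1 hi)).ge
  rw [hr_eq, det_binomialMatrix_cons_zero r' c hc.monotone]
  refine sum_pos' (fun D hD => hnonneg (strictMono_of_mem_piFinset_Ico_s5 hc.monotone hD))
    ⟨fun j => max (c j.castSucc) (r' j), ?_, hpos hr' ?_ fun j => le_max_right _ _⟩
  · refine Fintype.mem_piFinset.2 fun j => mem_Ico.2 ⟨le_max_left _ _, ?_⟩
    have := hc (Fin.castSucc_lt_succ (i := j))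
    have := hrc j.succ
    have := hr1 j
    simp only [r']
    omega
  · exact fun i j hij => max_lt_max (hc (Fin.castSucc_lt_castSucc_iff.2 hij)) (hr' hij)

theorem det_binomialMatrix_pos {N : ℕ} {r c : Fin N → ℕ} (hr : StrictMono r)
    (hc : StrictMono c) (hrc : ∀ i, r i ≤ c i) : 0 < (binomialMatrix R r c).det := by
  induction N with
  | zero => simp
  | succ M ih =>
  induction h : r 0 generalizing r c with
  | zero => exact det_binomialMatrix_pos_of_head_eq_zero ih hr hc hrc h
  | succ k ihk =>
    have hr1 (i : Fin (M + 1)) : 1 ≤ r i := by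
      have := hr.monotone (Fin.zero_le i)
      omega
    have hc1 (j : Fin (M + 1)) : 1 ≤ c j :=
      (hr1 0).trans ((hrc 0).trans (hc.monotone (Fin.zero_le j)))
    set r' := fun i => r i - 1
    set c' := fun j => c j - 1
    have hscale := prod_mul_det_binomialMatrix_succ (R := R) r' c'
    simp only [r', c', Nat.sub_add_cancel (hr1 _), Nat.sub_add_cancel (hc1 _)] at hscale
    have hpos' : 0 < (binomialMatrix R r' c').det := ihk
      (fun i j hij => by have := hr hij; have := hr1 i; simp only [r']; omega)
      (fun i j hij => by have := hc hij; have := hc1 i; simp only [c']; omega)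
      (fun i => Nat.sub_le_sub_right (hrc i) 1) (by simp [r', h])
    have hprod : (0 : R) < ∏ j, (c j : R) := prod_pos fun j _ => Nat.cast_pos.2 (hc1 j)
    exact pos_of_mul_pos_right (hscale ▸ mul_pos hprod hpos')
      (prod_nonneg fun i _ => Nat.cast_nonneg _)

end positivity

theorem StrictMonoOn.exists_fin_strictMono {α : ℕ → ℕ} {p m : ℕ}
    (hα : StrictMonoOn α (Set.Iic p)) (hm : α p ≤ m) :
    ∃ f : Fin (p + 1) → Fin (m + 1), StrictMono f ∧ ∀ i, (f i : ℕ) = α i := by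
  have hmem (i : Fin (p + 1)) : (i : ℕ) ∈ Set.Iic p := Nat.lt_succ_iff.1 i.2
  refine ⟨fun i => ⟨α i, Nat.lt_succ_of_le ((hα.monotoneOn (hmem i) Set.self_mem_Iic
    (hmem i)).trans hm)⟩, fun i j hij => hα (hmem i) (hmem j) hij, fun _ => rfl⟩

/-- If `{[r 0, …, r m], [c 0, …, c n]}` admits an ordered sub-pair of length
`p + 1`, then the Pascal submatrix `T_{r,c}` has rank at least `p + 1`. -/
theorem pascal_rank_ge_of_orderedSubPair
    (m n p : ℕ) (r c : ℕ → ℕ) (hr : StrictMono r) (hc : StrictMono c)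
    (hsub : ∃ α β : ℕ → ℕ, OrderedSubPair r c m n p α β) :
    p + 1 ≤ (pascalSub r c m n).rank := by
  obtain ⟨α, β, hα, hβ, hαm, hβn, hαβ⟩ := hsub
  obtain ⟨f, hf, hfα⟩ := hα.exists_fin_strictMono hαm
  obtain ⟨g, hg, hgβ⟩ := hβ.exists_fin_strictMono hβn
  have hdet : 0 < ((pascalSub r c m n).submatrix f g).det :=
    det_binomialMatrix_pos (hr.comp (Fin.val_strictMono.comp hf))
      (hc.comp (Fin.val_strictMono.comp hg))
      fun i => by simpa [hfα, hgβ] using hαβ i (Nat.lt_succ_iff.1 i.2)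
  simpa using le_rank_of_det_submatrix_ne_zero _ f g hdet.ne'
end
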